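/- Let f : ℝ → ℝ be continuous and let u be a solution of the radial equation on an interval J ⊆ (0,∞). Define E(r) = m·r^N·I(r) + (N−m)·r^(N−1)·φ_m(u'(r))·u(r). Then E is differentiable on J and E'(r) = r^(N−1)·Q(u(r)) for every r ∈ J, where Q(s) = m·N·F(s) − (N−m)·s·f(s). -/

import Mathlib

open Set Filter MeasureTheory

noncomputable def phim (m x : ℝ) : ℝ := |x| ^ (m - 2) * x

noncomputable def Fint (f : ℝ → ℝ) (s : ℝ) : ℝ := ∫ t in (0:ℝ)..s, f t

noncomputable def Qfun (N m : ℝ) (f : ℝ → ℝ) (s : ℝ) : ℝ :=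
  m * N * Fint f s - (N - m) * s * f s

/-- `u` (with derivative function `u'`) is a solution of the radial quasilinear
equation on the set `J`. -/
def IsSolutionOn (N m : ℝ) (f : ℝ → ℝ) (J : Set ℝ) (u u' : ℝ → ℝ) : Prop :=
  (∀ r ∈ J, HasDerivWithinAt u (u' r) J r) ∧ ContinuousOn u' J ∧
    ∃ w' : ℝ → ℝ,
      (∀ r ∈ J ∩ Set.Ioi (0:ℝ),
        HasDerivWithinAt (fun t => phim m (u' t)) (w' r) (J ∩ Set.Ioi (0:ℝ)) r) ∧
      ContinuousOn w' (J ∩ Set.Ioi (0:ℝ)) ∧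
      ∀ r ∈ J ∩ Set.Ioi (0:ℝ), w' r + ((N - 1) / r) * phim m (u' r) + f (u r) = 0

def IsIVPSolutionOn (N m : ℝ) (f : ℝ → ℝ) (α : ℝ) (J : Set ℝ) (u u' : ℝ → ℝ) : Prop :=
  IsSolutionOn N m f J u u' ∧ u 0 = α ∧ u' 0 = 0

/-- Admissible domains for the IVP: `[0,∞)` or `[0,R)` with `0 < R`. -/
def IVPDomain (J : Set ℝ) : Prop :=
  J = Set.Ici (0:ℝ) ∨ ∃ R : ℝ, 0 < R ∧ J = Set.Ico (0:ℝ) R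

/-- The solution `u` of the IVP on `J` cannot be extended to a solution on a
strictly larger admissible domain. -/
def Noncontinuable (N m : ℝ) (f : ℝ → ℝ) (α : ℝ) (J : Set ℝ) (u u' : ℝ → ℝ) : Prop :=
  ∀ J' : Set ℝ, IVPDomain J' → J ⊂ J' →
    ¬ ∃ v v' : ℝ → ℝ, IsIVPSolutionOn N m f α J' v v' ∧ Set.EqOn v u J ∧ Set.EqOn v' u' J

open Classical in
/-- The filter describing the approach to the right endpoint of an IVP domain. -/
noncomputable def domEnd (J : Set ℝ) : Filter ℝ :=
  if J = Set.Ici (0:ℝ) then Filter.atTop else nhdsWithin (sSup J) (Set.Iio (sSup J))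

def LocLipschitzOn (f : ℝ → ℝ) (S : Set ℝ) : Prop :=
  ∀ x ∈ S, ∃ ε : ℝ, 0 < ε ∧ ∃ K : NNReal, LipschitzOnWith K f (Metric.ball x ε ∩ S)

/-- Assumption (f₂). -/
structure Hf2 (f : ℝ → ℝ) (βm βp : ℝ) (γm γp : EReal) : Prop where
  hβm : βm < 0
  hβp : 0 < βp
  hFneg : ∀ s : ℝ, s ∈ Set.Ioo βm βp → s ≠ 0 → Fint f s < 0
  hFβm : Fint f βm = 0
  hFβp : Fint f βp = 0
  hγp : (βp : EReal) < γp
  hγm : γm < (βm : EReal)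
  hfpos : ∀ s : ℝ, βp < s → (s : EReal) < γp → 0 < f s
  hfneg : ∀ s : ℝ, γm < (s : EReal) → s < βm → f s < 0
  hγpzero : ∀ s : ℝ, (s : EReal) = γp → f s = 0
  hγmzero : ∀ s : ℝ, (s : EReal) = γm → f s = 0
  hlim : ∃ L : EReal,
    Filter.Tendsto (fun s : ℝ => (Fint f s : EReal))
      (Filter.comap Real.toEReal (nhdsWithin γp (Set.Iio γp))) (nhds L) ∧
    Filter.Tendsto (fun s : ℝ => (Fint f s : EReal))
      (Filter.comap Real.toEReal (nhdsWithin γm (Set.Ioi γm))) (nhds L)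
  hlip : LocLipschitzOn f {s : ℝ | (γm < (s : EReal) ∧ s < 0) ∨ (0 < s ∧ (s : EReal) < γp)}

/-- Assumption (f₃). -/
def Hf3 (N m : ℝ) (f : ℝ → ℝ) (βm βp : ℝ) (γm γp : EReal) : Prop :=
  (γp = ⊤ →
    (∃ βb : ℝ, βp < βb ∧ ∀ s : ℝ, βb ≤ s → 0 ≤ Qfun N m f s) ∧
    (∃ θ : ℝ, θ ∈ Set.Ioo (0:ℝ) 1 ∧
      Filter.Tendsto (fun s : ℝ =>
        sInf ((fun p : ℝ × ℝ =>
          Qfun N m f p.2 * ((|s| ^ (m - 2) * s) / f p.1) ^ (N / m)) ''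
            (Set.Icc (θ * s) s ×ˢ Set.Icc (θ * s) s)))
        Filter.atTop Filter.atTop)) ∧
  (γm = ⊥ →
    (∃ βb : ℝ, -βb < βm ∧ ∀ s : ℝ, s ≤ -βb → 0 ≤ Qfun N m f s) ∧
    (∃ θ : ℝ, θ ∈ Set.Ioo (0:ℝ) 1 ∧
      Filter.Tendsto (fun s : ℝ =>
        sInf ((fun p : ℝ × ℝ =>
          Qfun N m f p.2 * ((|s| ^ (m - 2) * s) / f p.1) ^ (N / m)) ''
            (Set.Icc s (θ * s) ×ˢ Set.Icc s (θ * s))))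
        Filter.atBot Filter.atTop))

/-- Assumption (f₄). -/
def Hf4 (N m : ℝ) (f : ℝ → ℝ) (βm βp : ℝ) (γm γp : EReal) : Prop :=
  (γp ≠ ⊤ → ∃ L₀ : ℝ, 0 < L₀ ∧ ∃ βb : ℝ, βp < βb ∧
    ∀ s : ℝ, βb ≤ s → (s : EReal) < γp → f s ≤ L₀ * (γp.toReal - s) ^ (m - 1)) ∧
  (γm ≠ ⊥ → ∃ L₀ : ℝ, 0 < L₀ ∧ ∃ βb : ℝ, -βm < βb ∧
    ∀ s : ℝ, γm < (s : EReal) → s ≤ -βb → -f s ≤ L₀ * (s - γm.toReal) ^ (m - 1))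

/-!
The energy splits as `m r^N (|u'|^m/m' + F(u)) + (N-m) r^(N-1) φ_m(u') u`. Only `φ_m(u')`, not `u'`,
is known to be differentiable, so `|u'|^m/m'` is differentiated as `|φ_m(u')|^{m'}/m'`, whose
derivative is `φ_{m'}(φ_m(u')) (φ_m(u'))' = u' (φ_m(u'))'`. Eliminating `(φ_m(u'))'` with the
equation, the terms in `u' f(u)` and `|u'|^m` cancel, leaving `r^(N-1) Q(u)`.
-/

lemma phim_zero (m : ℝ) : phim m 0 = 0 := by
  simp [phim]

lemma abs_phim {m : ℝ} (hm : m ≠ 1) (x : ℝ) : |phim m x| = |x| ^ (m - 1) := by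
  rcases eq_or_ne x 0 with rfl | hx
  · simp [phim_zero, Real.zero_rpow (sub_ne_zero.mpr hm)]
  · rw [phim, abs_mul, abs_of_nonneg (by positivity), ← Real.rpow_add_one (abs_ne_zero.mpr hx)]
    ring_nf

lemma phim_mul_self {m : ℝ} (hm : m ≠ 0) (x : ℝ) : phim m x * x = |x| ^ m := by
  rcases eq_or_ne x 0 with rfl | hx
  · simp [Real.zero_rpow hm]
  · have hax : |x| ≠ 0 := abs_ne_zero.mpr hx
    rw [phim, mul_assoc, ← sq, ← sq_abs, sq, ← mul_assoc, ← Real.rpow_add_one hax,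
      ← Real.rpow_add_one hax]
    ring_nf

lemma abs_phim_rpow_conj {m : ℝ} (hm : m ≠ 1) (x : ℝ) :
    |phim m x| ^ (m / (m - 1)) = |x| ^ m := by
  rw [abs_phim hm, ← Real.rpow_mul (abs_nonneg x), mul_div_cancel₀ _ (sub_ne_zero.mpr hm)]

lemma phim_conj_phim {m : ℝ} (hm : m ≠ 1) (x : ℝ) : phim (m / (m - 1)) (phim m x) = x := by
  rcases eq_or_ne x 0 with rfl | hx
  · simp [phim_zero]
  · have hax : 0 < |x| := abs_pos.mpr hx
    rw [phim, abs_phim hm, phim, ← Real.rpow_mul hax.le, ← mul_assoc, ← Real.rpow_add hax,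
      show (m - 1) * (m / (m - 1) - 2) + (m - 2) = 0 by
        field_simp [sub_ne_zero.mpr hm]; ring,
      Real.rpow_zero, one_mul]

lemma hasDerivAt_abs_rpow_div {p : ℝ} (hp : 1 < p) (x : ℝ) :
    HasDerivAt (fun y : ℝ => |y| ^ p / p) (phim p x) x := by
  refine ((hasDerivAt_abs_rpow x hp).div_const p).congr_deriv ?_
  rw [phim]
  field_simp [(zero_lt_one.trans hp).ne']

lemma HasDerivWithinAt.abs_rpow_div_conj_of_phim {m w r : ℝ} {v : ℝ → ℝ} {s : Set ℝ}
    (hm : 1 < m) (hv : HasDerivWithinAt (fun t => phim m (v t)) w s r) :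
    HasDerivWithinAt (fun t => |v t| ^ m / (m / (m - 1))) (v r * w) s r := by
  have hm1 : m ≠ 1 := hm.ne'
  have hconj : 1 < m / (m - 1) := by rw [lt_div_iff₀ (by linarith)]; linarith
  have h := (hasDerivAt_abs_rpow_div hconj (phim m (v r))).comp_hasDerivWithinAt r hv
  rw [phim_conj_phim hm1] at h
  simpa only [Function.comp_def, abs_phim_rpow_conj hm1] using h

lemma hasDerivAt_Fint {f : ℝ → ℝ} (hf : Continuous f) (x : ℝ) :
    HasDerivAt (Fint f) (f x) x :=
  (hf.integral_hasStrictDerivAt 0 x).hasDerivAt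

theorem pohozaev_energy_derivative_general
    (N m : ℝ) (hm : 1 < m) (f : ℝ → ℝ) (hf : Continuous f)
    (J : Set ℝ) (hJ0 : J ⊆ Set.Ioi (0:ℝ))
    (u u' : ℝ → ℝ) (hu : IsSolutionOn N m f J u u') :
    ∀ r ∈ J, HasDerivWithinAt
      (fun t => m * t ^ N * (|u' t| ^ m / (m / (m - 1)) + Fint f (u t))
        + (N - m) * t ^ (N - 1) * phim m (u' t) * u t)
      (r ^ (N - 1) * Qfun N m f (u r)) J r := by
  intro r hr
  obtain ⟨hu_deriv, -, w', hw'_deriv, -, hw'_eq⟩ := hu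
  rw [Set.inter_eq_left.mpr hJ0] at hw'_deriv hw'_eq
  have hr0 : 0 < r := hJ0 hr
  have hu'r := hu_deriv r hr
  have hw'r := hw'_deriv r hr
  have hpow (a : ℝ) : HasDerivWithinAt (fun t : ℝ => t ^ a) (a * r ^ (a - 1)) J r :=
    (Real.hasDerivAt_rpow_const (Or.inl hr0.ne')).hasDerivWithinAt
  have hE := (((hpow N).const_mul m).mul ((hw'r.abs_rpow_div_conj_of_phim hm).add
      ((hasDerivAt_Fint hf (u r)).comp_hasDerivWithinAt r hu'r))).add
    ((((hpow (N - 1)).const_mul (N - m)).mul hw'r).mul hu'r)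
  refine hE.congr_deriv ?_
  have hw' : w' r = -((N - 1) / r * phim m (u' r) + f (u r)) := by linarith [hw'_eq r hr]
  have hpow_N : r ^ N = r ^ (N - 1) * r := by rw [← Real.rpow_add_one hr0.ne']; ring_nf
  have hpow_sub_two : r ^ (N - 1 - 1) = r ^ (N - 1) / r := by rw [Real.rpow_sub hr0, Real.rpow_one]
  simp only [Pi.add_apply, Pi.mul_apply, Function.comp_apply]
  rw [Qfun, hw', ← phim_mul_self (by positivity : m ≠ 0), hpow_N, hpow_sub_two]
  field_simp
  ring

/-- Pohozaev-type identity: `E'(r) = r^(N-1) Q(u(r))`. -/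
theorem pohozaev_energy_derivative
    (N m : ℝ) (hm : 1 < m) (hNm : m ≤ N) (f : ℝ → ℝ) (hf : Continuous f)
    (J : Set ℝ) (hJc : J.OrdConnected) (hJ0 : J ⊆ Set.Ioi (0:ℝ))
    (u u' : ℝ → ℝ) (hu : IsSolutionOn N m f J u u') :
    ∀ r ∈ J, HasDerivWithinAt
      (fun t => m * t ^ N * (|u' t| ^ m / (m / (m - 1)) + Fint f (u t))
        + (N - m) * t ^ (N - 1) * phim m (u' t) * u t)
      (r ^ (N - 1) * Qfun N m f (u r)) J r :=
  pohozaev_energy_derivative_general N m hm f hf J hJ0 u u' hu
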